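/- For any positive integers n, p, and q, the following coefficient identity holds: ∑_{j_1+⋯+j_p=n} ∏_{t=1}^p q(j_t p + q)^{j_t - 1}/(p^{j_t} j_t!) = ∑_{i_1+⋯+i_q=n} ∏_{t=1}^q (i_t + 1)^{i_t - 1}/(i_t!), where the first sum ranges over all p-tuples of nonnegative integers summing to n, the second over all q-tuples of nonnegative integers summing to n, and each factor of the form x^{a-1} with a = 0 is interpreted as x^{-1}. -/

import Mathlib

/-!
Write `A_k(x) = x (x + k)^(k - 1)` and `E_x = ∑ A_k(x) z^k / k!`. The factors on the two sides
are the coefficients of `E_(q/p)` and of `E_1`, so the two sums are the `n`-th coefficients of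
`E_(q/p)^p` and `E_1^q`. Hurwitz's generalisation of Abel's identity,
`∑ C(n,k) A_k(x) A_(n-k)(y) = A_n(x + y)`, says `E_x E_y = E_(x+y)`, so both powers equal `E_q`.
Abel's identity itself comes from expanding binomially and observing that the `m`-th finite
difference of a polynomial of degree `< m` vanishes.
-/

open Finset PowerSeries Nat

section CommRing

variable {R : Type*} [CommRing R]

theorem sum_range_neg_one_pow_mul_choose_mul_pow_eq_zero {j m : ℕ} (h : j < m) (x : R) :
    ∑ k ∈ range (m + 1), (-1) ^ (m - k) * (m.choose k : R) * (x + k) ^ j = 0 := by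
  have := congr_fun (fwdDiff_iter_pow_eq_zero_of_lt (R := R) h) x
  rw [fwdDiff_iter_eq_sum_shift] at this
  simpa [zsmul_eq_mul] using this

theorem Nat.choose_mul_choose_sub_comm (n k j : ℕ) :
    n.choose k * (n - k).choose j = n.choose j * (n - j).choose k := by
  by_cases h : k + j ≤ n
  · have hk := Nat.choose_mul (n := n) (k := k + j) (s := k) (by omega)
    have hj := Nat.choose_mul (n := n) (k := k + j) (s := j) (by omega)
    rw [Nat.add_sub_cancel_left] at hk
    rw [Nat.add_sub_cancel] at hj
    rw [← hk, ← hj, Nat.choose_symm_add]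
  · rcases le_or_gt k n with hkn | hkn
    · rw [Nat.choose_eq_zero_of_lt (n := n - k) (by omega), mul_zero]
      rcases le_or_gt j n with hjn | hjn
      · rw [Nat.choose_eq_zero_of_lt (n := n - j) (by omega), mul_zero]
      · rw [Nat.choose_eq_zero_of_lt hjn, zero_mul]
    · rw [Nat.choose_eq_zero_of_lt hkn, Nat.choose_eq_zero_of_lt (n := n - j) (by omega)]
      simp

-- At `k = 0` this is the value `x · x⁻¹ = 1` of `x (x + k)^(k - 1)`.
def abelPoly (x : R) : ℕ → R
  | 0 => 1
  | k + 1 => x * (x + (k + 1 : ℕ)) ^ k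

@[simp] theorem abelPoly_zero (x : R) : abelPoly x 0 = 1 := rfl

theorem abelPoly_succ (x : R) (k : ℕ) : abelPoly x (k + 1) = x * (x + (k + 1 : ℕ)) ^ k := rfl

theorem abelPoly_mul_pow_sub {k m : ℕ} (h : k ≤ m + 1) (x : R) :
    abelPoly x k * (x + k) ^ (m + 1 - k) = x * (x + k) ^ m := by
  cases k with
  | zero => simp [_root_.pow_succ']
  | succ k => rw [abelPoly_succ, mul_assoc, ← pow_add, Nat.add_sub_add_right]; congr 2; omega

theorem abelPoly_eq_pow_sub (y : R) (l : ℕ) :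
    abelPoly y l = (y + l) ^ l - l * (y + l) ^ (l - 1) := by
  cases l with
  | zero => simp
  | succ l => rw [abelPoly_succ, Nat.add_sub_cancel, pow_succ]; push_cast; ring

theorem sum_range_choose_mul_abelPoly_mul_neg_pow (m : ℕ) (x : R) :
    ∑ k ∈ range (m + 1), (m.choose k : R) * abelPoly x k * (-(x + k)) ^ (m - k) =
      if m = 0 then 1 else 0 := by
  cases m with
  | zero => simp
  | succ m =>
    calc ∑ k ∈ range (m + 2), ((m + 1).choose k : R) * abelPoly x k * (-(x + k)) ^ (m + 1 - k)
        = ∑ k ∈ range (m + 2),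
            x * ((-1) ^ (m + 1 - k) * ((m + 1).choose k : R) * (x + k) ^ m) :=
          sum_congr rfl fun k hk => by
            have := abelPoly_mul_pow_sub (by simpa [Nat.lt_succ_iff] using hk) x
            rw [neg_pow]
            linear_combination ((-1) ^ (m + 1 - k) * ((m + 1).choose k : R)) * this
      _ = 0 := by
          rw [← mul_sum, sum_range_neg_one_pow_mul_choose_mul_pow_eq_zero m.lt_succ_self,
            mul_zero]

theorem sum_range_choose_mul_abelPoly_mul_pow (n : ℕ) (x z : R) :
    ∑ k ∈ range (n + 1), (n.choose k : R) * abelPoly x k * (z - (x + k)) ^ (n - k) = z ^ n := by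
  calc ∑ k ∈ range (n + 1), (n.choose k : R) * abelPoly x k * (z - (x + k)) ^ (n - k)
      = ∑ k ∈ range (n + 1), ∑ j ∈ range (n + 1), (n.choose j : R) * z ^ j *
          ((n - j).choose k * abelPoly x k * (-(x + k)) ^ (n - j - k)) :=
        sum_congr rfl fun k hk => by
          calc (n.choose k : R) * abelPoly x k * (z - (x + k)) ^ (n - k)
              = ∑ j ∈ range (n - k + 1), (n.choose k : R) * abelPoly x k *
                  (z ^ j * (-(x + k)) ^ (n - k - j) * ((n - k).choose j : R)) := by
                rw [sub_eq_add_neg, add_pow, mul_sum]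
            _ = ∑ j ∈ range (n + 1), (n.choose k : R) * abelPoly x k *
                  (z ^ j * (-(x + k)) ^ (n - k - j) * ((n - k).choose j : R)) :=
                (eventually_constant_sum (fun j hj => by
                  rw [Nat.choose_eq_zero_of_lt (n := n - k) (by omega), Nat.cast_zero, mul_zero,
                    mul_zero])
                  (by omega)).symm
            _ = _ := sum_congr rfl fun j _ => by
                have := congr_arg (Nat.cast (R := R)) (Nat.choose_mul_choose_sub_comm n k j)
                push_cast at this
                rw [Nat.sub_right_comm n j k]
                linear_combination (z ^ j * abelPoly x k * (-(x + k)) ^ (n - k - j)) * this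
    _ = ∑ j ∈ range (n + 1), (n.choose j : R) * z ^ j * (if n - j = 0 then 1 else 0) := by
        rw [sum_comm]
        refine sum_congr rfl fun j hj => ?_
        rw [← mul_sum, ← sum_range_choose_mul_abelPoly_mul_neg_pow,
          eventually_constant_sum (N := n - j + 1) _ (by omega)]
        intro k hk
        rw [Nat.choose_eq_zero_of_lt (by omega)]
        simp
    _ = z ^ n := by
        rw [sum_eq_single n (fun j hj hjn => by simp at hj; simp [show n - j ≠ 0 by omega])
          (by simp)]
        simp

theorem sum_antidiagonal_choose_mul_abelPoly_mul_pow (n : ℕ) (x y : R) :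
    ∑ kl ∈ antidiagonal n, (n.choose kl.1 : R) * abelPoly x kl.1 * (y + kl.2) ^ kl.2 =
      (x + y + n) ^ n := by
  rw [Nat.sum_antidiagonal_eq_sum_range_succ
      (fun k l => (n.choose k : R) * abelPoly x k * (y + l) ^ l),
    ← sum_range_choose_mul_abelPoly_mul_pow n x (x + y + n)]
  refine sum_congr rfl fun k hk => ?_
  rw [Nat.cast_sub (by simpa [Nat.lt_succ_iff] using hk)]
  ring_nf

theorem sum_antidiagonal_choose_mul_abelPoly_mul_abelPoly (n : ℕ) (x y : R) :
    ∑ kl ∈ antidiagonal n, (n.choose kl.1 : R) * abelPoly x kl.1 * abelPoly y kl.2 =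
      abelPoly (x + y) n := by
  cases n with
  | zero => simp
  | succ m =>
    have hderiv : ∑ kl ∈ antidiagonal (m + 1), ((m + 1).choose kl.1 : R) * abelPoly x kl.1 *
        (kl.2 * (y + kl.2) ^ (kl.2 - 1)) = (m + 1) * (x + (y + 1) + m) ^ m := by
      rw [← sum_antidiagonal_choose_mul_abelPoly_mul_pow m x (y + 1), mul_sum,
        Nat.sum_antidiagonal_succ']
      simp only [Nat.cast_zero, zero_mul, mul_zero, zero_add]
      refine sum_congr rfl fun kl hkl => ?_
      have hchoose := congr_arg (Nat.cast (R := R)) (Nat.choose_mul_succ_eq m kl.1)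
      rw [show m + 1 - kl.1 = kl.2 + 1 by have := mem_antidiagonal.1 hkl; omega] at hchoose
      push_cast at hchoose ⊢
      linear_combination (-(abelPoly x kl.1 * (y + 1 + kl.2) ^ kl.2)) * hchoose
    simp_rw [abelPoly_eq_pow_sub y, mul_sub, sum_sub_distrib,
      sum_antidiagonal_choose_mul_abelPoly_mul_pow, hderiv, abelPoly_succ]
    push_cast
    ring

end CommRing

theorem PowerSeries.coeff_pow_eq_sum_antidiagonalTuple {R : Type*} [CommSemiring R] (f : R⟦X⟧)
    (p n : ℕ) : coeff n (f ^ p) = ∑ j ∈ Nat.antidiagonalTuple p n, ∏ t, coeff (j t) f := by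
  rw [← Fin.prod_const, coeff_prod]
  exact sum_equiv Finsupp.equivFunOnFinite (by simp [Nat.mem_antidiagonalTuple]) (by simp)

section Field

variable {K : Type*} [Field K]

noncomputable def abelSeries (a : K) : K⟦X⟧ := PowerSeries.mk fun k => abelPoly a k / k !

theorem coeff_abelSeries (a : K) (k : ℕ) : coeff k (abelSeries a) = abelPoly a k / k ! :=
  coeff_mk _ _

theorem abelSeries_zero : abelSeries (0 : K) = 1 := by
  ext k
  cases k <;> simp [coeff_abelSeries, abelPoly_succ, coeff_one]

theorem abelSeries_add [CharZero K] (x y : K) :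
    abelSeries (x + y) = abelSeries x * abelSeries y := by
  ext n
  rw [coeff_mul, coeff_abelSeries, ← sum_antidiagonal_choose_mul_abelPoly_mul_abelPoly, sum_div]
  refine sum_congr rfl fun ⟨k, l⟩ hkl => ?_
  obtain rfl := mem_antidiagonal.1 hkl
  have : ((k + l)! : K) ≠ 0 := Nat.cast_ne_zero.2 (factorial_ne_zero _)
  simp only [coeff_abelSeries, Nat.cast_add_choose]
  field_simp

theorem abelSeries_natCast_mul [CharZero K] (m : ℕ) (a : K) :
    abelSeries (m * a) = abelSeries a ^ m := by
  induction m with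
  | zero => simp [abelSeries_zero]
  | succ m ih => rw [pow_succ, ← ih, ← abelSeries_add]; push_cast; ring_nf

theorem mul_add_zpow_div_eq_abelPoly_div {a b : K} (ha : a ≠ 0) (hb : b ≠ 0) (j : ℕ) :
    b * (j * a + b) ^ ((j : ℤ) - 1) / (a ^ j * j !) = abelPoly (b / a) j / j ! := by
  cases j with
  | zero => simp [hb]
  | succ j =>
    rw [abelPoly_succ, show ((j + 1 : ℕ) : ℤ) - 1 = j by push_cast; ring, zpow_natCast,
      show b / a + ((j + 1 : ℕ) : K) = ((j + 1 : ℕ) * a + b) / a by field_simp; ring, div_pow]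
    field_simp
    ring

end Field

theorem coefficient_identity_general (n p q : ℕ) (hp : 0 < p) (hq : 0 < q) :
    ∑ j ∈ Finset.Nat.antidiagonalTuple p n,
      ∏ t, (q : ℝ) * ((j t : ℝ) * p + q) ^ ((j t : ℤ) - 1) /
        (p ^ (j t) * (Nat.factorial (j t) : ℝ))
      = ∑ i ∈ Finset.Nat.antidiagonalTuple q n,
        ∏ t, ((i t : ℝ) + 1) ^ ((i t : ℤ) - 1) / (Nat.factorial (i t) : ℝ) := by
  have hp' : (p : ℝ) ≠ 0 := by positivity
  have hq' : (q : ℝ) ≠ 0 := by positivity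
  have hone (i : ℕ) : ((i : ℝ) + 1) ^ ((i : ℤ) - 1) / (i ! : ℝ) = abelPoly 1 i / i ! := by
    simpa using mul_add_zpow_div_eq_abelPoly_div (one_ne_zero' ℝ) one_ne_zero i
  calc _ = coeff n (abelSeries ((q : ℝ) / p) ^ p) := by
          simp only [coeff_pow_eq_sum_antidiagonalTuple, coeff_abelSeries,
            mul_add_zpow_div_eq_abelPoly_div hp' hq']
    _ = coeff n (abelSeries (1 : ℝ) ^ q) := by
          rw [← abelSeries_natCast_mul, ← abelSeries_natCast_mul, mul_div_cancel₀ _ hp',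
            mul_one]
    _ = _ := by simp only [coeff_pow_eq_sum_antidiagonalTuple, coeff_abelSeries, hone]

theorem coefficient_identity (n p q : ℕ) (hn : 0 < n) (hp : 0 < p) (hq : 0 < q) :
    ∑ j ∈ Finset.Nat.antidiagonalTuple p n,
      ∏ t, (q : ℝ) * ((j t : ℝ) * p + q) ^ ((j t : ℤ) - 1) /
        (p ^ (j t) * (Nat.factorial (j t) : ℝ))
      = ∑ i ∈ Finset.Nat.antidiagonalTuple q n,
        ∏ t, ((i t : ℝ) + 1) ^ ((i t : ℤ) - 1) / (Nat.factorial (i t) : ℝ) :=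
  coefficient_identity_general n p q hp hq
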